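/- Let P = u uᵀ for a unit vector u, and let (X^{(l)}) be a sequence of nonzero matrices in ℝ^{N×d} such that ‖(I−P)X^{(l)}‖_F / ‖P X^{(l)}‖_F → 0 as l → ∞. Then NumRank(X^{(l)}) → 1 as l → ∞. -/

import Mathlib

open scoped BigOperators

noncomputable def vecNorm {n : ℕ} (v : Fin n → ℝ) : ℝ := Real.sqrt (∑ i, v i ^ 2)

noncomputable def frobNorm {N d : ℕ} (X : Matrix (Fin N) (Fin d) ℝ) : ℝ :=
  Real.sqrt (∑ i, ∑ j, X i j ^ 2)

noncomputable def specNorm {N d : ℕ} (X : Matrix (Fin N) (Fin d) ℝ) : ℝ :=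
  sSup {c : ℝ | ∃ v : Fin d → ℝ, vecNorm v ≤ 1 ∧ c = vecNorm (X.mulVec v)}

noncomputable def numRank {N d : ℕ} (X : Matrix (Fin N) (Fin d) ℝ) : ℝ :=
  frobNorm X ^ 2 / specNorm X ^ 2

def frobInner {N d : ℕ} (A B : Matrix (Fin N) (Fin d) ℝ) : ℝ := ∑ i, ∑ j, A i j * B i j

/-- Hilbert projective distance on the open positive cone. -/
noncomputable def dH {n : ℕ} (x y : Fin n → ℝ) : ℝ :=
  Real.log ((⨆ i, x i / y i) / (⨅ i, x i / y i))

/-- Apply a map `σ : ℝ^N → ℝ^N` to each column of a matrix. -/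
def colApply {N d : ℕ} (σ : (Fin N → ℝ) → (Fin N → ℝ)) (M : Matrix (Fin N) (Fin d) ℝ) :
    Matrix (Fin N) (Fin d) ℝ := Matrix.of fun i j => σ (fun k => M k j) i


/-! Since `P = u uᵀ` is an orthogonal projection, `‖X‖_F² = ‖P X‖_F² + ‖(I - P) X‖_F²`, and since
`P X = u (uᵀ X)` has rank one, `‖P X‖_F = ‖uᵀ X‖ ≤ ‖X‖₂ ≤ ‖X‖_F`. Hence
`1 ≤ NumRank X ≤ ‖X‖_F² / ‖P X‖_F² = 1 + (‖(I - P) X‖_F / ‖P X‖_F)²`, and the upper bound tends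
to `1`. -/

open Matrix Filter Topology

section

variable {m n : ℕ}

lemma vecNorm_nonneg (v : Fin n → ℝ) : 0 ≤ vecNorm v := Real.sqrt_nonneg _

lemma vecNorm_sq (v : Fin n → ℝ) : vecNorm v ^ 2 = v ⬝ᵥ v := by
  rw [vecNorm, Real.sq_sqrt (by positivity)]
  simp only [dotProduct, sq]

lemma vecNorm_smul (c : ℝ) (v : Fin n → ℝ) : vecNorm (c • v) = |c| * vecNorm v := by
  simp only [vecNorm, Pi.smul_apply, smul_eq_mul, mul_pow, ← Finset.mul_sum]
  rw [Real.sqrt_mul (sq_nonneg c), Real.sqrt_sq_eq_abs]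

lemma dotProduct_le_vecNorm_mul_vecNorm (v w : Fin n → ℝ) : v ⬝ᵥ w ≤ vecNorm v * vecNorm w :=
  Real.sum_mul_le_sqrt_mul_sqrt _ _ _

lemma frobNorm_nonneg (X : Matrix (Fin m) (Fin n) ℝ) : 0 ≤ frobNorm X := Real.sqrt_nonneg _

lemma frobNorm_sq (X : Matrix (Fin m) (Fin n) ℝ) : frobNorm X ^ 2 = (Xᵀ * X).trace := by
  rw [frobNorm, Real.sq_sqrt (by positivity), Finset.sum_comm]
  simp only [trace, diag, mul_apply, transpose_apply, sq]

lemma frobNorm_pos {X : Matrix (Fin m) (Fin n) ℝ} (hX : X ≠ 0) : 0 < frobNorm X := by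
  refine Real.sqrt_pos.2 <| lt_of_le_of_ne (by positivity) fun h => hX ?_
  ext i j
  have hi := (Finset.sum_eq_zero_iff_of_nonneg fun i _ => by positivity).1 h.symm i
    (Finset.mem_univ i)
  exact pow_eq_zero_iff two_ne_zero |>.1 <|
    (Finset.sum_eq_zero_iff_of_nonneg fun j _ => sq_nonneg (X i j)).1 hi j (Finset.mem_univ j)

lemma frobNorm_vecMulVec (a : Fin m → ℝ) (b : Fin n → ℝ) :
    frobNorm (vecMulVec a b) = vecNorm a * vecNorm b := by
  simp only [frobNorm, vecNorm, vecMulVec_apply, mul_pow, ← Finset.mul_sum, ← Finset.sum_mul]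
  exact Real.sqrt_mul (by positivity) _

lemma vecNorm_mulVec_le (X : Matrix (Fin m) (Fin n) ℝ) (v : Fin n → ℝ) :
    vecNorm (X *ᵥ v) ≤ frobNorm X * vecNorm v := by
  rw [frobNorm, vecNorm, vecNorm, ← Real.sqrt_mul (by positivity), Finset.sum_mul]
  gcongr with i
  exact Finset.sum_mul_sq_le_sq_mul_sq Finset.univ (X i) v

lemma frobNorm_mem_upperBounds (X : Matrix (Fin m) (Fin n) ℝ) :
    frobNorm X ∈ upperBounds {c : ℝ | ∃ v : Fin n → ℝ, vecNorm v ≤ 1 ∧ c = vecNorm (X *ᵥ v)} := by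
  rintro _ ⟨v, hv, rfl⟩
  exact (vecNorm_mulVec_le X v).trans (mul_le_of_le_one_right (frobNorm_nonneg X) hv)

lemma vecNorm_mulVec_le_specNorm (X : Matrix (Fin m) (Fin n) ℝ) {v : Fin n → ℝ}
    (hv : vecNorm v ≤ 1) : vecNorm (X *ᵥ v) ≤ specNorm X :=
  le_csSup ⟨_, frobNorm_mem_upperBounds X⟩ ⟨v, hv, rfl⟩

lemma specNorm_nonneg (X : Matrix (Fin m) (Fin n) ℝ) : 0 ≤ specNorm X :=
  (vecNorm_nonneg _).trans (vecNorm_mulVec_le_specNorm X (v := 0) (by simp [vecNorm]))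

lemma specNorm_le_frobNorm (X : Matrix (Fin m) (Fin n) ℝ) : specNorm X ≤ frobNorm X :=
  csSup_le ⟨_, 0, by simp [vecNorm], rfl⟩ (frobNorm_mem_upperBounds X)

lemma vecNorm_vecMul_le (u : Fin m → ℝ) (X : Matrix (Fin m) (Fin n) ℝ) :
    vecNorm (u ᵥ* X) ≤ vecNorm u * specNorm X := by
  set w := u ᵥ* X
  rcases (vecNorm_nonneg w).eq_or_lt with hw | hw
  · rw [← hw]
    exact mul_nonneg (vecNorm_nonneg u) (specNorm_nonneg X)
  -- test `X` against the unit vector in the direction of `uᵀ X`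
  set v := (vecNorm w)⁻¹ • w
  have hv : vecNorm v = 1 := by
    rw [vecNorm_smul, abs_inv, abs_of_pos hw, inv_mul_cancel₀ hw.ne']
  calc vecNorm w = w ⬝ᵥ v := by
        rw [dotProduct_smul, ← vecNorm_sq, smul_eq_mul]
        field_simp
    _ = u ⬝ᵥ X *ᵥ v := (dotProduct_mulVec u X v).symm
    _ ≤ vecNorm u * vecNorm (X *ᵥ v) := dotProduct_le_vecNorm_mul_vecNorm _ _
    _ ≤ vecNorm u * specNorm X :=
        mul_le_mul_of_nonneg_left (vecNorm_mulVec_le_specNorm X hv.le) (vecNorm_nonneg u)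

lemma frobNorm_mul_sq_of_isStarProjection {P : Matrix (Fin m) (Fin m) ℝ}
    (hP : IsStarProjection P) (X : Matrix (Fin m) (Fin n) ℝ) :
    frobNorm (P * X) ^ 2 = (Xᵀ * (P * X)).trace := by
  have hPt : Pᵀ = P := by
    rw [← conjTranspose_eq_transpose_of_trivial, ← star_eq_conjTranspose]
    exact hP.isSelfAdjoint
  rw [frobNorm_sq, transpose_mul, hPt, Matrix.mul_assoc, ← Matrix.mul_assoc P,
    hP.isIdempotentElem.eq]

lemma frobNorm_sq_eq_add_of_isStarProjection {P : Matrix (Fin m) (Fin m) ℝ}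
    (hP : IsStarProjection P) (X : Matrix (Fin m) (Fin n) ℝ) :
    frobNorm X ^ 2 = frobNorm (P * X) ^ 2 + frobNorm ((1 - P) * X) ^ 2 := by
  rw [frobNorm_mul_sq_of_isStarProjection hP, frobNorm_mul_sq_of_isStarProjection hP.one_sub,
    ← trace_add, ← Matrix.mul_add, ← Matrix.add_mul, add_sub_cancel, Matrix.one_mul, frobNorm_sq]

lemma isStarProjection_vecMulVec {u : Fin m → ℝ} (hu : vecNorm u = 1) :
    IsStarProjection (vecMulVec u u) where
  isIdempotentElem := by
    have huu : u ⬝ᵥ u = 1 := by rw [← vecNorm_sq, hu, one_pow]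
    rw [IsIdempotentElem, vecMulVec_mul_vecMulVec, huu, one_smul]
  isSelfAdjoint := by
    rw [IsSelfAdjoint, star_eq_conjTranspose, conjTranspose_eq_transpose_of_trivial,
      transpose_vecMulVec]

lemma frobNorm_vecMulVec_mul_le_specNorm {u : Fin m → ℝ} (hu : vecNorm u = 1)
    (X : Matrix (Fin m) (Fin n) ℝ) : frobNorm (vecMulVec u u * X) ≤ specNorm X := by
  simpa [vecMulVec_mul, frobNorm_vecMulVec, hu] using vecNorm_vecMul_le u X

lemma one_le_numRank {X : Matrix (Fin m) (Fin n) ℝ} (hX : 0 < specNorm X) : 1 ≤ numRank X := by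
  rw [numRank, one_le_div (by positivity)]
  gcongr
  exact specNorm_le_frobNorm X

lemma numRank_le_one_add_sq {P : Matrix (Fin m) (Fin m) ℝ} (hP : IsStarProjection P)
    {X : Matrix (Fin m) (Fin n) ℝ} (hPX : P * X ≠ 0) (hle : frobNorm (P * X) ≤ specNorm X) :
    numRank X ≤ 1 + (frobNorm ((1 - P) * X) / frobNorm (P * X)) ^ 2 := by
  have ha := frobNorm_pos hPX
  calc numRank X
      = (frobNorm (P * X) ^ 2 + frobNorm ((1 - P) * X) ^ 2) / specNorm X ^ 2 := by
        rw [numRank, frobNorm_sq_eq_add_of_isStarProjection hP]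
    _ ≤ (frobNorm (P * X) ^ 2 + frobNorm ((1 - P) * X) ^ 2) / frobNorm (P * X) ^ 2 := by
        gcongr
    _ = 1 + (frobNorm ((1 - P) * X) / frobNorm (P * X)) ^ 2 := by
        field_simp

end

theorem stmt8_general {N d : ℕ} (u : Fin N → ℝ) (hu : vecNorm u = 1)
    (X : ℕ → Matrix (Fin N) (Fin d) ℝ)
    (hPX : ∀ᶠ l in Filter.atTop, Matrix.vecMulVec u u * X l ≠ 0)
    (hratio : Filter.Tendsto
      (fun l => frobNorm ((1 - Matrix.vecMulVec u u) * X l) /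
        frobNorm (Matrix.vecMulVec u u * X l)) Filter.atTop (nhds 0)) :
    Filter.Tendsto (fun l => numRank (X l)) Filter.atTop (nhds 1) := by
  have hupper := (hratio.pow 2).const_add 1
  rw [zero_pow two_ne_zero, add_zero] at hupper
  refine tendsto_of_tendsto_of_tendsto_of_le_of_le' tendsto_const_nhds hupper ?_ ?_
  · filter_upwards [hPX] with l hl
    exact one_le_numRank <|
      (frobNorm_pos hl).trans_le (frobNorm_vecMulVec_mul_le_specNorm hu (X l))
  · filter_upwards [hPX] with l hl
    exact numRank_le_one_add_sq (isStarProjection_vecMulVec hu) hl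
      (frobNorm_vecMulVec_mul_le_specNorm hu (X l))

/-- If `‖(I-P)X^{(l)}‖_F / ‖P X^{(l)}‖_F → 0` then `NumRank(X^{(l)}) → 1`. -/
theorem stmt8 {N d : ℕ} (u : Fin N → ℝ) (hu : vecNorm u = 1)
    (X : ℕ → Matrix (Fin N) (Fin d) ℝ) (hX : ∀ l, X l ≠ 0)
    (hPX : ∀ᶠ l in Filter.atTop, Matrix.vecMulVec u u * X l ≠ 0)
    (hratio : Filter.Tendsto
      (fun l => frobNorm ((1 - Matrix.vecMulVec u u) * X l) /
        frobNorm (Matrix.vecMulVec u u * X l)) Filter.atTop (nhds 0)) :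
    Filter.Tendsto (fun l => numRank (X l)) Filter.atTop (nhds 1) :=
  stmt8_general u hu X hPX hratio
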